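/- Let f : ℝ^m → ℝ be differentiable and β-smooth, meaning f(z) ≤ f(z') + ⟨∇f(z'), z − z'⟩ + (β/2)‖z − z'‖² for all z, z'. Let Φ : ℝ^d → ℝ^m be differentiable with ‖Φ(a) − Φ(b) − DΦ(b)(a − b)‖ ≤ (β_Φ/2)‖a − b‖² for all a, b. Set h = f ∘ Φ and let w⁺ = w − η∇h(w) be one gradient descent step. If σ_max(DΦ(w')) ≤ (3ν/2) for all w' on the segment from w to w⁺, and η ≤ 1/(β_Φ ‖∇f(Φ(w))‖ + (9β/4)(3ν/2)²), then f(Φ(w)) − f(Φ(w⁺)) ≥ (η/2)‖∇h(w)‖². -/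
import Mathlib

open RealInnerProductSpace

private lemma key_alg (β βΦ ν η nG : ℝ) (hβ : 0 ≤ β) (hβΦ : 0 ≤ βΦ) (hν : 0 ≤ ν)
    (hη : 0 < η) (hnG : 0 ≤ nG)
    (hηle : η ≤ 1 / (βΦ * nG + 9 * β / 4 * (3 * ν / 2) ^ 2)) :
    η * (βΦ * nG + 9 * β * ν ^ 2 / 4) ≤ 1 := by
  have hK0 : 0 ≤ βΦ * nG + 9 * β / 4 * (3 * ν / 2) ^ 2 := by positivity
  rcases eq_or_lt_of_le hK0 with h | h
  · have h1 : βΦ * nG = 0 := by nlinarith [sq_nonneg ν]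
    have h2 : β * ν ^ 2 = 0 := by nlinarith [sq_nonneg ν]
    nlinarith
  · rw [le_div_iff₀ h] at hηle
    nlinarith [mul_nonneg (mul_nonneg hη.le hβ) (sq_nonneg ν)]

private lemma descent_arith (β βΦ ν η ng nG ip Δ fw fp : ℝ)
    (hβ : 0 ≤ β) (hη : 0 < η) (hng : 0 ≤ ng) (hnG : 0 ≤ nG)
    (hsm : fp ≤ fw + (-η * ng ^ 2 + ip) + β / 2 * Δ ^ 2)
    (hip : ip ≤ nG * (βΦ / 2 * (η * ng) ^ 2))
    (hΔsq : Δ ^ 2 ≤ (3 * ν / 2 * (η * ng)) ^ 2)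
    (hηK : η * (βΦ * nG + 9 * β * ν ^ 2 / 4) ≤ 1) :
    η / 2 * ng ^ 2 ≤ fw - fp := by
  nlinarith [mul_le_mul_of_nonneg_left hηK (by positivity : (0:ℝ) ≤ η * ng ^ 2 / 2),
    mul_le_mul_of_nonneg_left hΔsq (by positivity : (0:ℝ) ≤ β / 2)]

/-- Descent inequality for one gradient step on the composed objective `h = f ∘ Φ`. -/
theorem descent_inequality_composed
    {d m : ℕ} (f : EuclideanSpace ℝ (Fin m) → ℝ)
    (Φ : EuclideanSpace ℝ (Fin d) → EuclideanSpace ℝ (Fin m))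
    (β βΦ ν η : ℝ) (hβ : 0 ≤ β) (hβΦ : 0 ≤ βΦ) (hν : 0 ≤ ν) (hη : 0 < η)
    (hf : Differentiable ℝ f) (hΦ : Differentiable ℝ Φ)
    (hsmooth : ∀ z z' : EuclideanSpace ℝ (Fin m),
      f z ≤ f z' + ⟪gradient f z', z - z'⟫ + β / 2 * ‖z - z'‖ ^ 2)
    (hΦtaylor : ∀ a b : EuclideanSpace ℝ (Fin d),
      ‖Φ a - Φ b - fderiv ℝ Φ b (a - b)‖ ≤ βΦ / 2 * ‖a - b‖ ^ 2)
    (w wplus : EuclideanSpace ℝ (Fin d))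
    (hstep : wplus = w - η • gradient (fun u => f (Φ u)) w)
    (hseg : ∀ s ∈ segment ℝ w wplus, ‖fderiv ℝ Φ s‖ ≤ 3 * ν / 2)
    (hηle : η ≤ 1 / (βΦ * ‖gradient f (Φ w)‖ + 9 * β / 4 * (3 * ν / 2) ^ 2)) :
    η / 2 * ‖gradient (fun u => f (Φ u)) w‖ ^ 2 ≤ f (Φ w) - f (Φ wplus) := by
  set g := gradient (fun u => f (Φ u)) w with hg
  set G := gradient f (Φ w) with hG
  set D := fderiv ℝ Φ w with hD
  have hgrad : ∀ (F : EuclideanSpace ℝ (Fin d) → ℝ) (x v), ⟪gradient F x, v⟫ = fderiv ℝ F x v := by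
    intro F x v
    rw [gradient, InnerProductSpace.toDual_symm_apply]
  have hgradm : ∀ (F : EuclideanSpace ℝ (Fin m) → ℝ) (x v), ⟪gradient F x, v⟫ = fderiv ℝ F x v := by
    intro F x v
    rw [gradient, InnerProductSpace.toDual_symm_apply]
  have hchain : ∀ v, ⟪g, v⟫ = ⟪G, D v⟫ := by
    intro v
    have h1 : fderiv ℝ (fun u => f (Φ u)) w = (fderiv ℝ f (Φ w)).comp (fderiv ℝ Φ w) :=
      fderiv_comp w (hf _) (hΦ _)
    rw [hg, hgrad, h1, hG, hgradm]
    rfl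
  have hwdiff : wplus - w = (-η) • g := by
    rw [hstep]; module
  have hnormw : ‖wplus - w‖ = η * ‖g‖ := by
    rw [hwdiff, norm_smul]
    simp [abs_of_pos hη]
  set R := Φ wplus - Φ w - D (wplus - w) with hR
  have hRbound : ‖R‖ ≤ βΦ / 2 * (η * ‖g‖) ^ 2 := by
    have := hΦtaylor wplus w
    rwa [hnormw] at this
  have hΔ : ‖Φ wplus - Φ w‖ ≤ 3 * ν / 2 * (η * ‖g‖) := by
    have := (convex_segment w wplus).norm_image_sub_le_of_norm_fderiv_le
      (fun x _ => hΦ.differentiableAt) hseg (left_mem_segment _ _ _) (right_mem_segment _ _ _)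
    rwa [hnormw] at this
  have hGD : ⟪G, Φ wplus - Φ w⟫ = -η * ‖g‖ ^ 2 + ⟪G, R⟫ := by
    have hsplit : Φ wplus - Φ w = D (wplus - w) + R := by rw [hR]; abel
    have hDv : D (wplus - w) = (-η) • D g := by rw [hwdiff, map_smul]
    rw [hsplit, inner_add_right, hDv, inner_smul_right, ← hchain g, real_inner_self_eq_norm_sq]
  have hsm := hsmooth (Φ wplus) (Φ w)
  rw [hGD] at hsm
  have hGR : ⟪G, R⟫ ≤ ‖G‖ * (βΦ / 2 * (η * ‖g‖) ^ 2) :=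
    (real_inner_le_norm G R).trans (mul_le_mul_of_nonneg_left hRbound (norm_nonneg _))
  have hΔsq : ‖Φ wplus - Φ w‖ ^ 2 ≤ (3 * ν / 2 * (η * ‖g‖)) ^ 2 := by
    have h0 : (0:ℝ) ≤ ‖Φ wplus - Φ w‖ := norm_nonneg _
    nlinarith
  have hηK := key_alg β βΦ ν η ‖G‖ hβ hβΦ hν hη (norm_nonneg _) hηle
  exact descent_arith β βΦ ν η ‖g‖ ‖G‖ ⟪G, R⟫ ‖Φ wplus - Φ w‖ (f (Φ w)) (f (Φ wplus))
    hβ hη (norm_nonneg _) (norm_nonneg _) hsm hGR hΔsq hηK
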